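/- Every least upper bound of ψ and φ in the majorization order is majorized by the intermediate vector: if w ∈ ℝ^d is a descending probability vector such that ψ ≺ w, φ ≺ w, and w ≺ u for every descending probability vector u with ψ ≺ u and φ ≺ u, then w ≺ φ^f. (In lattice terms, the optimal common product φ^∨ = ψ ∨ φ satisfies φ^∨ ≺ φ^f.) -/

import Mathlib

open Finset

/-- Tail-sum coherence monotone `C_l(p) = ∑_{i=l}^d p_i`, for a vector with (1-based)
entries `p 1, …, p d`.  Note `Cm d p (d+1) = 0` automatically. -/
noncomputable def Cm (d : ℕ) (p : ℕ → ℝ) (l : ℕ) : ℝ := ∑ i ∈ Finset.Icc l d, p i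

/-- `p` is a descending probability vector on the (1-based) index range `{1, …, d}`. -/
structure DescProb (d : ℕ) (p : ℕ → ℝ) : Prop where
  nonneg : ∀ i, 1 ≤ i → i ≤ d → 0 ≤ p i
  anti : ∀ i j, 1 ≤ i → i ≤ j → j ≤ d → p j ≤ p i
  sum_one : ∑ i ∈ Finset.Icc 1 d, p i = 1

/-- `p ≺ q` : `p` is majorized by `q` (both regarded as descending vectors on `{1, …, d}`). -/
def MajorizedBy (d : ℕ) (p q : ℕ → ℝ) : Prop :=
  (∀ k, 1 ≤ k → k ≤ d → ∑ i ∈ Finset.Icc 1 k, p i ≤ ∑ i ∈ Finset.Icc 1 k, q i) ∧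
    ∑ i ∈ Finset.Icc 1 d, p i = ∑ i ∈ Finset.Icc 1 d, q i

/-- The ratio `(C_l(ψ) - C_prev(ψ)) / (C_l(φ) - C_prev(φ))` appearing in the recursive
construction of the intermediate vector. -/
noncomputable def ratio (d : ℕ) (ψ φ : ℕ → ℝ) (prev l : ℕ) : ℝ :=
  (Cm d ψ l - Cm d ψ prev) / (Cm d φ l - Cm d φ prev)

/-- One step of the recursion: the minimal ratio over `l ∈ {1, …, prev - 1}`. -/
noncomputable def stepQ (d : ℕ) (ψ φ : ℕ → ℝ) (prev : ℕ) : ℝ :=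
  sInf {x : ℝ | ∃ l, 1 ≤ l ∧ l ≤ prev - 1 ∧ x = ratio d ψ φ prev l}

/-- One step of the recursion: the smallest `l ∈ {1, …, prev - 1}` attaining the minimal
ratio. -/
noncomputable def stepL (d : ℕ) (ψ φ : ℕ → ℝ) (prev : ℕ) : ℕ :=
  sInf {l : ℕ | 1 ≤ l ∧ l ≤ prev - 1 ∧ ratio d ψ φ prev l = stepQ d ψ φ prev}

/-- The sequence of indices `l_0 = d + 1 > l_1 > l_2 > ⋯` of the recursive construction. -/
noncomputable def Lseq (d : ℕ) (ψ φ : ℕ → ℝ) : ℕ → ℕ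
  | 0 => d + 1
  | j + 1 => stepL d ψ φ (Lseq d ψ φ j)

/-- The sequence of ratios `q_1 < q_2 < ⋯` of the recursive construction (`Qseq d ψ φ j`
is `q_j` for `j ≥ 1`; the value at `0` is irrelevant). -/
noncomputable def Qseq (d : ℕ) (ψ φ : ℕ → ℝ) : ℕ → ℝ
  | 0 => 1
  | j + 1 => stepQ d ψ φ (Lseq d ψ φ j)

/-- The terminating step `k` of the recursion: the first index `j` with `l_j = 1`. -/
noncomputable def kstop (d : ℕ) (ψ φ : ℕ → ℝ) : ℕ := sInf {j : ℕ | Lseq d ψ φ j = 1}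

/-- The intermediate vector `φ^f`, with `φ^f_i = q_j φ_i` for `i ∈ {l_j, …, l_{j-1} - 1}`
(for `i ∈ {1, …, d}`, the smallest `j` with `l_j ≤ i` is precisely the `j` with
`l_j ≤ i ≤ l_{j-1} - 1`). -/
noncomputable def phif (d : ℕ) (ψ φ : ℕ → ℝ) (i : ℕ) : ℝ :=
  Qseq d ψ φ (sInf {j : ℕ | Lseq d ψ φ j ≤ i}) * φ i

/-!
The intermediate vector is itself a common upper bound of `ψ` and `φ`, so the least-upper-bound
property of `w` gives `w ≺ φ^f`.

Plot the points `(C_l(φ), C_l(ψ))`, `l = d + 1, …, 1`; they run from `(0, 0)` to `(1, 1)` with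
strictly increasing abscissae. Starting from `(0, 0)`, each step of the recursion moves to the
point of least slope from the current one, so it traces the lower convex hull of these points,
with slopes `q_1 ≤ q_2 ≤ ⋯`, and `C_l(φ^f)` is this hull evaluated at `C_l(φ)`. Lying below the
points gives `C_l(φ^f) ≤ C_l(ψ)`; being convex with endpoints on the diagonal gives
`C_l(φ^f) ≤ C_l(φ)`; and the increasing slopes make `φ^f` descending.
-/

lemma add_mul_sub_le_of_endpoints {a b c q x : ℝ} (hax : a ≤ x) (hxb : x ≤ b) (hca : c ≤ a)
    (hcb : c + q * (b - a) ≤ b) : c + q * (x - a) ≤ x := by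
  rcases le_total q 1 with hq | hq
  · nlinarith
  · nlinarith

section Cm

variable {d : ℕ}

lemma Cm_succ_eq_zero (d : ℕ) (p : ℕ → ℝ) : Cm d p (d + 1) = 0 := by
  simp [Cm]

lemma DescProb.Cm_one {p : ℕ → ℝ} (hp : DescProb d p) : Cm d p 1 = 1 :=
  hp.sum_one

lemma Cm_sub_Cm (p : ℕ → ℝ) {l m : ℕ} (hlm : l ≤ m) (hm : m ≤ d + 1) :
    Cm d p l - Cm d p m = ∑ i ∈ Ico l m, p i := by
  rw [Cm, Cm, ← Ico_add_one_right_eq_Icc, ← Ico_add_one_right_eq_Icc,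
    ← sum_Ico_consecutive p hlm hm, add_sub_cancel_right]

lemma sum_Icc_one_eq_Cm_sub (p : ℕ → ℝ) {m : ℕ} (hm : m ≤ d) :
    ∑ i ∈ Icc 1 m, p i = Cm d p 1 - Cm d p (m + 1) := by
  rw [Cm_sub_Cm p (by omega) (by omega), Ico_add_one_right_eq_Icc]

lemma Cm_le_Cm {p : ℕ → ℝ} (hp : ∀ i, 1 ≤ i → i ≤ d → 0 ≤ p i) {l m : ℕ} (hl : 1 ≤ l)
    (hlm : l ≤ m) : Cm d p m ≤ Cm d p l :=
  sum_le_sum_of_subset_of_nonneg (Icc_subset_Icc_left hlm) fun i hi _ =>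
    hp i (hl.trans (mem_Icc.1 hi).1) (mem_Icc.1 hi).2

lemma Cm_lt_Cm {p : ℕ → ℝ} (hp : ∀ i, 1 ≤ i → i ≤ d → 0 < p i) {l m : ℕ} (hl : 1 ≤ l)
    (hld : l ≤ d) (hlm : l < m) : Cm d p m < Cm d p l :=
  sum_lt_sum_of_subset (Icc_subset_Icc_left hlm.le) (mem_Icc.2 ⟨le_rfl, hld⟩)
    (by simp [hlm]) (hp l hl hld) fun i hi _ =>
      (hp i (hl.trans (mem_Icc.1 hi).1) (mem_Icc.1 hi).2).le

lemma majorizedBy_of_Cm_le {p q : ℕ → ℝ} (h1 : Cm d p 1 = Cm d q 1)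
    (h : ∀ l, 1 ≤ l → l ≤ d → Cm d q l ≤ Cm d p l) : MajorizedBy d p q := by
  refine ⟨fun m _ hm => ?_, h1⟩
  rw [sum_Icc_one_eq_Cm_sub p hm, sum_Icc_one_eq_Cm_sub q hm, h1]
  rcases hm.lt_or_eq with hm | rfl
  · exact sub_le_sub_left (h (m + 1) (by omega) hm) _
  · simp [Cm_succ_eq_zero]

end Cm

section Step

variable {d : ℕ} {ψ φ : ℕ → ℝ} {prev : ℕ}

lemma finite_ratios (d : ℕ) (ψ φ : ℕ → ℝ) (prev : ℕ) :
    {x : ℝ | ∃ l, 1 ≤ l ∧ l ≤ prev - 1 ∧ x = ratio d ψ φ prev l}.Finite :=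
  ((Set.finite_Icc 1 (prev - 1)).image (ratio d ψ φ prev)).subset
    (by rintro _ ⟨l, h1, h2, rfl⟩; exact ⟨l, ⟨h1, h2⟩, rfl⟩)

lemma stepQ_le_ratio {l : ℕ} (hl : 1 ≤ l) (hlp : l < prev) :
    stepQ d ψ φ prev ≤ ratio d ψ φ prev l :=
  csInf_le (finite_ratios d ψ φ prev).bddBelow ⟨l, hl, by omega, rfl⟩

lemma stepL_spec (hprev : 2 ≤ prev) :
    1 ≤ stepL d ψ φ prev ∧ stepL d ψ φ prev < prev ∧
      ratio d ψ φ prev (stepL d ψ φ prev) = stepQ d ψ φ prev := by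
  obtain ⟨l, hl1, hl2, hl⟩ := Set.Nonempty.csInf_mem
    (s := {x : ℝ | ∃ l, 1 ≤ l ∧ l ≤ prev - 1 ∧ x = ratio d ψ φ prev l})
    ⟨_, 1, le_rfl, by omega, rfl⟩ (finite_ratios d ψ φ prev)
  obtain ⟨h1, h2, h3⟩ : stepL d ψ φ prev ∈
      {l | 1 ≤ l ∧ l ≤ prev - 1 ∧ ratio d ψ φ prev l = stepQ d ψ φ prev} :=
    Nat.sInf_mem ⟨l, hl1, hl2, hl.symm⟩
  exact ⟨h1, by omega, h3⟩

lemma stepL_le_sub_one (d : ℕ) (ψ φ : ℕ → ℝ) (prev : ℕ) : stepL d ψ φ prev ≤ prev - 1 := by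
  rcases Set.eq_empty_or_nonempty
    {l : ℕ | 1 ≤ l ∧ l ≤ prev - 1 ∧ ratio d ψ φ prev l = stepQ d ψ φ prev} with h | h
  · simp [stepL, h]
  · exact (Nat.sInf_mem h).2.1

lemma stepQ_mul_le (hφpos : ∀ i, 1 ≤ i → i ≤ d → 0 < φ i) (hprev : prev ≤ d + 1) {l : ℕ}
    (hl : 1 ≤ l) (hlp : l < prev) :
    stepQ d ψ φ prev * (Cm d φ l - Cm d φ prev) ≤ Cm d ψ l - Cm d ψ prev :=
  (le_div_iff₀ (sub_pos.2 (Cm_lt_Cm hφpos hl (by omega) hlp))).1 (stepQ_le_ratio hl hlp)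

lemma stepQ_mul_eq (hφpos : ∀ i, 1 ≤ i → i ≤ d → 0 < φ i) (hprev2 : 2 ≤ prev)
    (hprev : prev ≤ d + 1) :
    stepQ d ψ φ prev * (Cm d φ (stepL d ψ φ prev) - Cm d φ prev) =
      Cm d ψ (stepL d ψ φ prev) - Cm d ψ prev := by
  obtain ⟨h1, h2, h3⟩ := stepL_spec (ψ := ψ) (φ := φ) hprev2
  rw [← h3, ratio, div_mul_cancel₀ _ (sub_pos.2 (Cm_lt_Cm hφpos h1 (by omega) h2)).ne']

lemma stepQ_nonneg (hψ : ∀ i, 1 ≤ i → i ≤ d → 0 ≤ ψ i)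
    (hφpos : ∀ i, 1 ≤ i → i ≤ d → 0 < φ i) (hprev2 : 2 ≤ prev)
    (hprev : prev ≤ d + 1) : 0 ≤ stepQ d ψ φ prev := by
  obtain ⟨h1, h2, h3⟩ := stepL_spec (ψ := ψ) (φ := φ) hprev2
  rw [← h3]
  exact div_nonneg (sub_nonneg.2 (Cm_le_Cm hψ h1 h2.le))
    (sub_pos.2 (Cm_lt_Cm hφpos h1 (by omega) h2)).le

lemma stepQ_le_stepQ_stepL (hφpos : ∀ i, 1 ≤ i → i ≤ d → 0 < φ i) (hprev : prev ≤ d + 1)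
    (hm : 2 ≤ stepL d ψ φ prev) :
    stepQ d ψ φ prev ≤ stepQ d ψ φ (stepL d ψ φ prev) := by
  have hmp := stepL_le_sub_one d ψ φ prev
  obtain ⟨hn1, hnm, -⟩ := stepL_spec (ψ := ψ) (φ := φ) hm
  have hprev_eq := stepQ_mul_eq hφpos (ψ := ψ) (by omega : 2 ≤ prev) hprev
  have hm_eq := stepQ_mul_eq hφpos (ψ := ψ) hm (by omega)
  have hle := stepQ_mul_le hφpos (ψ := ψ) hprev hn1 (by omega)
  refine le_of_mul_le_mul_right ?_ (sub_pos.2 (Cm_lt_Cm hφpos hn1 (by omega) hnm))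
  linarith

end Step

section Recursion

variable {d : ℕ} {ψ φ : ℕ → ℝ}

lemma Lseq_succ_le (j : ℕ) : Lseq d ψ φ (j + 1) ≤ Lseq d ψ φ j - 1 :=
  stepL_le_sub_one d ψ φ _

lemma Lseq_antitone : Antitone (Lseq d ψ φ) :=
  antitone_nat_of_succ_le fun j => (Lseq_succ_le j).trans (Nat.sub_le _ _)

lemma Lseq_le (j : ℕ) : Lseq d ψ φ j ≤ d + 1 :=
  Lseq_antitone (Nat.zero_le j)

lemma Lseq_bounds_of_ne_one {j : ℕ} (h : ∀ m < j, Lseq d ψ φ m ≠ 1) :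
    1 ≤ Lseq d ψ φ j ∧ Lseq d ψ φ j + j ≤ d + 1 := by
  induction j with
  | zero => exact ⟨by simp [Lseq], by simp [Lseq]⟩
  | succ j ih =>
    obtain ⟨h1, h2⟩ := ih fun m hm => h m (by omega)
    have hj : Lseq d ψ φ j ≠ 1 := h j (by omega)
    obtain ⟨h3, h4, -⟩ := stepL_spec (ψ := ψ) (φ := φ) (by omega : 2 ≤ Lseq d ψ φ j)
    exact ⟨h3, by rw [Lseq]; omega⟩

lemma exists_Lseq_eq_one : ∃ j, Lseq d ψ φ j = 1 := by
  by_contra! h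
  have := Lseq_bounds_of_ne_one (d := d) (ψ := ψ) (φ := φ) (j := d + 1) fun m _ => h m
  omega

lemma Lseq_kstop : Lseq d ψ φ (kstop d ψ φ) = 1 :=
  Nat.sInf_mem exists_Lseq_eq_one

lemma Lseq_ne_one {j : ℕ} (hj : j < kstop d ψ φ) : Lseq d ψ φ j ≠ 1 :=
  Nat.notMem_of_lt_sInf (s := {j | Lseq d ψ φ j = 1}) hj

lemma one_le_Lseq {j : ℕ} (hj : j ≤ kstop d ψ φ) : 1 ≤ Lseq d ψ φ j :=
  (Lseq_bounds_of_ne_one fun _ hm => Lseq_ne_one (hm.trans_le hj)).1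

lemma two_le_Lseq {j : ℕ} (hj : j < kstop d ψ φ) : 2 ≤ Lseq d ψ φ j := by
  have h1 := one_le_Lseq hj.le
  have h2 := Lseq_ne_one hj
  omega

lemma exists_block {i : ℕ} (hi : 1 ≤ i) (hid : i ≤ d) :
    ∃ j < kstop d ψ φ, Lseq d ψ φ (j + 1) ≤ i ∧ i < Lseq d ψ φ j := by
  have hk : kstop d ψ φ ∈ {j | Lseq d ψ φ j ≤ i} := by
    change Lseq d ψ φ (kstop d ψ φ) ≤ i
    rw [Lseq_kstop]; exact hi
  set J := sInf {j | Lseq d ψ φ j ≤ i}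
  have hJ : Lseq d ψ φ J ≤ i := Nat.sInf_mem ⟨_, hk⟩
  have hJ0 : J ≠ 0 := by
    intro h
    rw [h] at hJ
    simp only [Lseq] at hJ
    omega
  have hJk : J ≤ kstop d ψ φ := Nat.sInf_le hk
  refine ⟨J - 1, by omega, by rwa [Nat.sub_add_cancel (by omega)], ?_⟩
  exact not_le.1 (Nat.notMem_of_lt_sInf (s := {j | Lseq d ψ φ j ≤ i}) (by omega : J - 1 < J))

lemma phif_of_block {i j : ℕ} (hji : Lseq d ψ φ (j + 1) ≤ i) (hij : i < Lseq d ψ φ j) :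
    phif d ψ φ i = Qseq d ψ φ (j + 1) * φ i := by
  rw [phif, (Nat.sInf_upward_closed_eq_succ_iff (s := {j | Lseq d ψ φ j ≤ i})
    (fun _ _ hab ha => (Lseq_antitone hab).trans ha) j).2 ⟨hji, hij.not_ge⟩]

lemma Qseq_mul_le (hφpos : ∀ i, 1 ≤ i → i ≤ d → 0 < φ i) {j l : ℕ} (hl : 1 ≤ l)
    (hlj : l < Lseq d ψ φ j) :
    Qseq d ψ φ (j + 1) * (Cm d φ l - Cm d φ (Lseq d ψ φ j)) ≤
      Cm d ψ l - Cm d ψ (Lseq d ψ φ j) :=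
  stepQ_mul_le hφpos (Lseq_le j) hl hlj

lemma Qseq_mul_eq (hφpos : ∀ i, 1 ≤ i → i ≤ d → 0 < φ i) {j : ℕ} (hj : j < kstop d ψ φ) :
    Qseq d ψ φ (j + 1) * (Cm d φ (Lseq d ψ φ (j + 1)) - Cm d φ (Lseq d ψ φ j)) =
      Cm d ψ (Lseq d ψ φ (j + 1)) - Cm d ψ (Lseq d ψ φ j) :=
  stepQ_mul_eq hφpos (two_le_Lseq hj) (Lseq_le j)

lemma Qseq_nonneg (hψ : ∀ i, 1 ≤ i → i ≤ d → 0 ≤ ψ i) (hφpos : ∀ i, 1 ≤ i → i ≤ d → 0 < φ i)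
    {j : ℕ} (hj : j < kstop d ψ φ) : 0 ≤ Qseq d ψ φ (j + 1) :=
  stepQ_nonneg hψ hφpos (two_le_Lseq hj) (Lseq_le j)

lemma Qseq_mono (hφpos : ∀ i, 1 ≤ i → i ≤ d → 0 < φ i) {i j : ℕ} (hij : i ≤ j)
    (hj : j < kstop d ψ φ) : Qseq d ψ φ (i + 1) ≤ Qseq d ψ φ (j + 1) := by
  induction j, hij using Nat.le_induction with
  | base => rfl
  | succ n _ ih =>
    exact (ih (by omega)).trans (stepQ_le_stepQ_stepL hφpos (Lseq_le n) (two_le_Lseq hj))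

lemma add_Qseq_mul_le_Cm (hψ : DescProb d ψ) (hφ : DescProb d φ)
    (hφpos : ∀ i, 1 ≤ i → i ≤ d → 0 < φ i) {j l : ℕ} (hj : j < kstop d ψ φ)
    (hinv : Cm d ψ (Lseq d ψ φ j) ≤ Cm d φ (Lseq d ψ φ j)) (hl : 1 ≤ l)
    (hlj : l ≤ Lseq d ψ φ j) :
    Cm d ψ (Lseq d ψ φ j) + Qseq d ψ φ (j + 1) * (Cm d φ l - Cm d φ (Lseq d ψ φ j)) ≤
      Cm d φ l := by
  -- `l = 1` competes in the minimum defining `q_{j+1}`, and `C_1 = 1` for both vectors.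
  have h1 := Qseq_mul_le (ψ := ψ) hφpos le_rfl
    (by have := two_le_Lseq hj; omega : 1 < Lseq d ψ φ j)
  rw [hψ.Cm_one, hφ.Cm_one] at h1
  have hl1 : Cm d φ l ≤ 1 := hφ.Cm_one ▸ Cm_le_Cm hφ.nonneg le_rfl hl
  exact add_mul_sub_le_of_endpoints (Cm_le_Cm hφ.nonneg hl hlj) hl1 hinv (by linarith)

lemma Cm_Lseq_le (hψ : DescProb d ψ) (hφ : DescProb d φ)
    (hφpos : ∀ i, 1 ≤ i → i ≤ d → 0 < φ i) {j : ℕ} (hj : j ≤ kstop d ψ φ) :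
    Cm d ψ (Lseq d ψ φ j) ≤ Cm d φ (Lseq d ψ φ j) := by
  induction j with
  | zero => simp [Lseq, Cm_succ_eq_zero]
  | succ j ih =>
    have hjk : j < kstop d ψ φ := by omega
    have hstep := add_Qseq_mul_le_Cm hψ hφ hφpos hjk (ih hjk.le) (one_le_Lseq hj)
      ((Lseq_succ_le j).trans (Nat.sub_le _ _))
    linarith [Qseq_mul_eq hφpos hjk]

end Recursion

section Phif

variable {d : ℕ} {ψ φ : ℕ → ℝ}

lemma Cm_phif_sub {j l : ℕ} (hjl : Lseq d ψ φ (j + 1) ≤ l) (hlj : l ≤ Lseq d ψ φ j) :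
    Cm d (phif d ψ φ) l - Cm d (phif d ψ φ) (Lseq d ψ φ j) =
      Qseq d ψ φ (j + 1) * (Cm d φ l - Cm d φ (Lseq d ψ φ j)) := by
  rw [Cm_sub_Cm _ hlj (Lseq_le j), Cm_sub_Cm _ hlj (Lseq_le j), mul_sum]
  exact sum_congr rfl fun i hi => phif_of_block (hjl.trans (mem_Ico.1 hi).1) (mem_Ico.1 hi).2

lemma Cm_phif_Lseq (hφpos : ∀ i, 1 ≤ i → i ≤ d → 0 < φ i) {j : ℕ} (hj : j ≤ kstop d ψ φ) :
    Cm d (phif d ψ φ) (Lseq d ψ φ j) = Cm d ψ (Lseq d ψ φ j) := by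
  induction j with
  | zero => simp [Lseq, Cm_succ_eq_zero]
  | succ j ih =>
    have hjk : j < kstop d ψ φ := by omega
    have hsub := Cm_phif_sub (d := d) (ψ := ψ) (φ := φ) (j := j) le_rfl
      ((Lseq_succ_le j).trans (Nat.sub_le _ _))
    linarith [Qseq_mul_eq hφpos hjk, ih hjk.le]

lemma Cm_phif_of_block (hφpos : ∀ i, 1 ≤ i → i ≤ d → 0 < φ i) {j l : ℕ}
    (hj : j < kstop d ψ φ) (hjl : Lseq d ψ φ (j + 1) ≤ l) (hlj : l ≤ Lseq d ψ φ j) :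
    Cm d (phif d ψ φ) l =
      Cm d ψ (Lseq d ψ φ j) + Qseq d ψ φ (j + 1) * (Cm d φ l - Cm d φ (Lseq d ψ φ j)) := by
  rw [← Cm_phif_sub hjl hlj, Cm_phif_Lseq hφpos hj.le]
  ring

lemma Cm_phif_one (hψ : DescProb d ψ) (hφpos : ∀ i, 1 ≤ i → i ≤ d → 0 < φ i) :
    Cm d (phif d ψ φ) 1 = 1 := by
  rw [← hψ.Cm_one, ← Lseq_kstop (d := d) (ψ := ψ) (φ := φ), Cm_phif_Lseq hφpos le_rfl]

lemma Cm_phif_le_left (hφpos : ∀ i, 1 ≤ i → i ≤ d → 0 < φ i) {l : ℕ} (hl : 1 ≤ l)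
    (hld : l ≤ d) : Cm d (phif d ψ φ) l ≤ Cm d ψ l := by
  obtain ⟨j, hj, hjl, hlj⟩ := exists_block (ψ := ψ) (φ := φ) hl hld
  rw [Cm_phif_of_block hφpos hj hjl hlj.le]
  linarith [Qseq_mul_le hφpos hl hlj]

lemma Cm_phif_le_right (hψ : DescProb d ψ) (hφ : DescProb d φ)
    (hφpos : ∀ i, 1 ≤ i → i ≤ d → 0 < φ i) {l : ℕ} (hl : 1 ≤ l) (hld : l ≤ d) :
    Cm d (phif d ψ φ) l ≤ Cm d φ l := by
  obtain ⟨j, hj, hjl, hlj⟩ := exists_block (ψ := ψ) (φ := φ) hl hld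
  rw [Cm_phif_of_block hφpos hj hjl hlj.le]
  exact add_Qseq_mul_le_Cm hψ hφ hφpos hj (Cm_Lseq_le hψ hφ hφpos hj.le) hl hlj.le

lemma descProb_phif (hψ : DescProb d ψ) (hφ : DescProb d φ)
    (hφpos : ∀ i, 1 ≤ i → i ≤ d → 0 < φ i) : DescProb d (phif d ψ φ) where
  nonneg i hi hid := by
    obtain ⟨j, hj, hji, hij⟩ := exists_block (ψ := ψ) (φ := φ) hi hid
    rw [phif_of_block hji hij]
    exact mul_nonneg (Qseq_nonneg hψ.nonneg hφpos hj) (hφ.nonneg i hi hid)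
  anti i i' hi hii' hi'd := by
    obtain ⟨j, hj, hji, hij⟩ := exists_block (ψ := ψ) (φ := φ) hi (hii'.trans hi'd)
    obtain ⟨j', hj', hji', hij'⟩ := exists_block (ψ := ψ) (φ := φ) (hi.trans hii') hi'd
    have hj'j : j' ≤ j := by
      by_contra! h
      linarith [Lseq_antitone (d := d) (ψ := ψ) (φ := φ) (h : j + 1 ≤ j')]
    rw [phif_of_block hji hij, phif_of_block hji' hij']
    calc Qseq d ψ φ (j' + 1) * φ i'
        ≤ Qseq d ψ φ (j + 1) * φ i' :=
          mul_le_mul_of_nonneg_right (Qseq_mono hφpos hj'j hj) (hφ.nonneg i' (by omega) hi'd)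
      _ ≤ Qseq d ψ φ (j + 1) * φ i :=
          mul_le_mul_of_nonneg_left (hφ.anti i i' hi hii' hi'd) (Qseq_nonneg hψ.nonneg hφpos hj)
  sum_one := Cm_phif_one hψ hφpos

end Phif

theorem join_majorized_by_phif_general (d : ℕ) (ψ φ : ℕ → ℝ)
    (hψ : DescProb d ψ) (hφ : DescProb d φ)
    (hφpos : ∀ i, 1 ≤ i → i ≤ d → 0 < φ i)
    (w : ℕ → ℝ)
    (hlub : ∀ u : ℕ → ℝ, DescProb d u → MajorizedBy d ψ u → MajorizedBy d φ u →
      MajorizedBy d w u) :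
    MajorizedBy d w (phif d ψ φ) :=
  hlub _ (descProb_phif hψ hφ hφpos)
    (majorizedBy_of_Cm_le (by rw [hψ.Cm_one, Cm_phif_one hψ hφpos])
      fun _ hl hld => Cm_phif_le_left hφpos hl hld)
    (majorizedBy_of_Cm_le (by rw [hφ.Cm_one, Cm_phif_one hψ hφpos])
      fun _ hl hld => Cm_phif_le_right hψ hφ hφpos hl hld)

/-- Every least upper bound `w` of `ψ` and `φ` in the majorization order
(the optimal common product `φ^∨ = ψ ∨ φ`) is majorized by the intermediate vector:
`w ≺ φ^f`. -/
theorem join_majorized_by_phif (d : ℕ) (hd : 1 ≤ d) (ψ φ : ℕ → ℝ)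
    (hψ : DescProb d ψ) (hφ : DescProb d φ)
    (hψpos : ∀ i, 1 ≤ i → i ≤ d → 0 < ψ i) (hφpos : ∀ i, 1 ≤ i → i ≤ d → 0 < φ i)
    (w : ℕ → ℝ) (hw : DescProb d w)
    (hψw : MajorizedBy d ψ w) (hφw : MajorizedBy d φ w)
    (hlub : ∀ u : ℕ → ℝ, DescProb d u → MajorizedBy d ψ u → MajorizedBy d φ u →
      MajorizedBy d w u) :
    MajorizedBy d w (phif d ψ φ) :=
  join_majorized_by_phif_general d ψ φ hψ hφ hφpos w hlub
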